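/- The dual polynomial Ψ_{2n+1} has at least 2n distinct real zeros (not counting multiplicity), of which at least 2n−D/2 are simple zeros. -/

import Mathlib

open Polynomial MeasureTheory

/-- The skew-symmetric bilinear form `⟨P,Q⟩₄ = (1/2) ∫_ℝ (P Q' − P' Q) e^{−2V}`. -/
noncomputable def skew4 (V P Q : Polynomial ℝ) : ℝ :=
  (1 / 2) * ∫ x : ℝ,
    (P.eval x * (derivative Q).eval x - (derivative P).eval x * Q.eval x) *
      Real.exp (-2 * V.eval x)

/-- A sequence of monic real polynomials, `deg P_n = n`, which is skew-orthogonal with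
respect to `⟨·,·⟩₄`. -/
def IsSkewOrthSeq (V : Polynomial ℝ) (P : ℕ → Polynomial ℝ) : Prop :=
  (∀ n, (P n).Monic ∧ (P n).natDegree = n) ∧
  (∀ n m, skew4 V (P (2 * n)) (P (2 * m)) = 0) ∧
  (∀ n m, skew4 V (P (2 * n + 1)) (P (2 * m + 1)) = 0) ∧
  (∀ n m, n ≠ m → skew4 V (P (2 * n)) (P (2 * m + 1)) = 0)

/-- The dual polynomial `Ψ = −(1/(γD)) e^V (P e^{−V})' = −(1/(γD)) (P' − V'·P)`. -/
noncomputable def dualPoly (V : Polynomial ℝ) (γ : ℝ) (D : ℕ) (P : Polynomial ℝ) :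
    Polynomial ℝ :=
  Polynomial.C (-(1 / (γ * D))) * (derivative P - derivative V * P)

section Helpers
open Filter Topology Real Set

variable {V : Polynomial ℝ}

lemma grow_atTop (hV2 : 2 ≤ V.natDegree) (hVpos : 0 < V.leadingCoeff) (c : ℝ) :
    Tendsto (fun x => 2 * V.eval x - c * x) atTop atTop := by
  set W : Polynomial ℝ := C 2 * V - C c * X with hW
  have h2V : (C 2 * V).natDegree = V.natDegree := natDegree_C_mul two_ne_zero
  have hcx : (C c * X).natDegree ≤ 1 :=
    (natDegree_C_mul_le _ _).trans (by simp)
  have hlt : (C c * X).natDegree < (C 2 * V).natDegree := by omega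
  have hWdeg : W.natDegree = V.natDegree :=
    (natDegree_sub_eq_left_of_natDegree_lt hlt).trans h2V
  have h2Vne : C 2 * V ≠ 0 := by
    intro h
    have := h2V
    rw [h] at this
    simp at this
    omega
  have hdlt : (C c * X).degree < (C 2 * V).degree := by
    have h1 : (C c * X).degree ≤ 1 := degree_C_mul_X_le c
    have h2 : (2 : WithBot ℕ) ≤ (C 2 * V).degree := by
      rw [degree_eq_natDegree h2Vne, h2V]
      exact_mod_cast hV2
    calc (C c * X).degree ≤ (1 : WithBot ℕ) := h1
      _ < (2 : WithBot ℕ) := by exact_mod_cast (by norm_num : (1:ℕ) < 2)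
      _ ≤ (C 2 * V).degree := h2
  have hWlead : W.leadingCoeff = 2 * V.leadingCoeff := by
    rw [hW, leadingCoeff_sub_of_degree_lt hdlt, leadingCoeff_mul, leadingCoeff_C]
  have hWdegpos : 0 < W.degree := by
    rw [degree_eq_natDegree (by
      intro h; rw [h] at hWdeg; simp at hWdeg; omega), hWdeg]
    exact_mod_cast (by omega : 0 < V.natDegree)
  have := tendsto_atTop_of_leadingCoeff_nonneg W hWdegpos (by rw [hWlead]; positivity)
  refine this.congr fun x => by simp [hW]

lemma decay_atTop (hV2 : 2 ≤ V.natDegree) (hVpos : 0 < V.leadingCoeff) (Q : Polynomial ℝ)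
    (c : ℝ) :
    Tendsto (fun x => Q.eval x * Real.exp (c * x - 2 * V.eval x)) atTop (𝓝 0) := by
  have h1 : Tendsto (fun x => Q.eval x / Real.exp x) atTop (𝓝 0) := Q.tendsto_div_exp_atTop
  have h2 : Tendsto (fun x => Real.exp ((c + 1) * x - 2 * V.eval x)) atTop (𝓝 0) := by
    refine Real.tendsto_exp_atBot.comp ?_
    have := (grow_atTop hV2 hVpos (c + 1))
    have := tendsto_neg_atTop_atBot.comp this
    refine this.congr fun x => ?_
    simp only [Function.comp_apply]
    ring
  have := h1.mul h2
  rw [zero_mul] at this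
  refine this.congr fun x => ?_
  rw [div_mul_eq_mul_div, mul_div_assoc, ← Real.exp_sub]
  ring_nf

lemma decay_atBot (hV2 : 2 ≤ V.natDegree) (hVpos : 0 < V.leadingCoeff)
    (hVeven : Even V.natDegree) (Q : Polynomial ℝ) (c : ℝ) :
    Tendsto (fun x => Q.eval x * Real.exp (c * x - 2 * V.eval x)) atBot (𝓝 0) := by
  have hXdeg : (-X : Polynomial ℝ).natDegree = 1 := by simp
  have hV'deg : (V.comp (-X)).natDegree = V.natDegree := by
    rw [natDegree_comp, hXdeg, mul_one]
  have hV'lead : (V.comp (-X)).leadingCoeff = V.leadingCoeff := by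
    rw [leadingCoeff_comp (by rw [hXdeg]; norm_num)]
    have : (-X : Polynomial ℝ).leadingCoeff = -1 := by simp
    rw [this, hVeven.neg_one_pow, mul_one]
  have key := decay_atTop (V := V.comp (-X)) (by omega) (by rw [hV'lead]; exact hVpos)
    (Q.comp (-X)) (-c)
  have := key.comp tendsto_neg_atBot_atTop
  refine this.congr fun x => ?_
  simp only [Function.comp_apply, eval_comp, eval_neg, eval_X]
  ring_nf

lemma integrable_poly_exp (hV2 : 2 ≤ V.natDegree) (hVpos : 0 < V.leadingCoeff)
    (hVeven : Even V.natDegree) (Q : Polynomial ℝ) :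
    Integrable (fun x => Q.eval x * Real.exp (-2 * V.eval x)) := by
  have hcont : Continuous fun x => Q.eval x * Real.exp (-2 * V.eval x) := by
    exact Q.continuous.mul ((continuous_const.mul V.continuous).rexp)
  have hmeas : AEStronglyMeasurable (fun x => Q.eval x * Real.exp (-2 * V.eval x))
      (volume : Measure ℝ) := hcont.aestronglyMeasurable
  obtain ⟨a, ha⟩ : ∃ a, ∀ x, a ≤ x → ‖Q.eval x * Real.exp (1 * x - 2 * V.eval x)‖ < 1 := by
    have h := ((decay_atTop hV2 hVpos Q 1).norm).eventually_lt_const (by norm_num : ‖(0:ℝ)‖ < 1)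
    exact eventually_atTop.1 h
  obtain ⟨b, hb⟩ : ∃ b, ∀ x, x ≤ b → ‖Q.eval x * Real.exp ((-1) * x - 2 * V.eval x)‖ < 1 := by
    have h := ((decay_atBot hV2 hVpos hVeven Q (-1)).norm).eventually_lt_const
      (by norm_num : ‖(0:ℝ)‖ < 1)
    exact eventually_atBot.1 h
  have key : ∀ c x : ℝ, Q.eval x * Real.exp (-2 * V.eval x)
      = (Q.eval x * Real.exp (c * x - 2 * V.eval x)) * Real.exp (-(c * x)) := by
    intro c x
    rw [mul_assoc, ← Real.exp_add]
    ring_nf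
  have hIoi : IntegrableOn (fun x => Q.eval x * Real.exp (-2 * V.eval x)) (Ioi (max a b)) := by
    refine Integrable.mono (g := fun x : ℝ => Real.exp (-1 * x))
      (exp_neg_integrableOn_Ioi _ one_pos) hmeas.restrict ?_
    refine (ae_restrict_iff' measurableSet_Ioi).2 (ae_of_all _ fun x hx => ?_)
    have hx' : a ≤ x := le_of_lt (lt_of_le_of_lt (le_max_left a b) hx)
    rw [key 1]
    rw [norm_mul]
    have h1 : ‖Real.exp (-(1 * x))‖ = Real.exp (-1 * x) := by
      rw [Real.norm_eq_abs, abs_exp]; ring_nf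
    rw [h1]
    have h2 : ‖Real.exp (-1 * x)‖ = Real.exp (-1 * x) := by
      rw [Real.norm_eq_abs, abs_exp]
    rw [h2]
    exact mul_le_of_le_one_left (exp_nonneg _) (le_of_lt (ha x hx'))
  have hIic : IntegrableOn (fun x => Q.eval x * Real.exp (-2 * V.eval x)) (Iic (min a b)) := by
    refine Integrable.mono (g := Real.exp) (integrableOn_exp_Iic _) hmeas.restrict ?_
    refine (ae_restrict_iff' measurableSet_Iic).2 (ae_of_all _ fun x hx => ?_)
    have hx' : x ≤ b := le_trans hx (min_le_right a b)
    rw [key (-1)]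
    rw [norm_mul]
    have h1 : ‖Real.exp (-(-1 * x))‖ = Real.exp x := by
      rw [Real.norm_eq_abs, abs_exp]; ring_nf
    rw [h1]
    have h2 : ‖Real.exp x‖ = Real.exp x := by rw [Real.norm_eq_abs, abs_exp]
    rw [h2]
    exact mul_le_of_le_one_left (exp_nonneg _) (le_of_lt (hb x hx'))
  have hIcc : IntegrableOn (fun x => Q.eval x * Real.exp (-2 * V.eval x))
      (Icc (min a b) (max a b)) := hcont.integrableOn_Icc
  rw [← integrableOn_univ]
  have hcover : (univ : Set ℝ) ⊆ Iic (min a b) ∪ (Icc (min a b) (max a b) ∪ Ioi (max a b)) := by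
    intro x _
    rcases le_or_gt x (min a b) with h | h
    · exact Or.inl h
    rcases le_or_gt x (max a b) with h' | h'
    · exact Or.inr (Or.inl ⟨le_of_lt h, h'⟩)
    · exact Or.inr (Or.inr h')
  exact ((hIic.union (hIcc.union hIoi)).mono_set hcover)

lemma ibp (hV2 : 2 ≤ V.natDegree) (hVpos : 0 < V.leadingCoeff)
    (hVeven : Even V.natDegree) (A : Polynomial ℝ) :
    ∫ x : ℝ, ((derivative A).eval x - 2 * (derivative V).eval x * A.eval x) *
      Real.exp (-2 * V.eval x) = 0 := by
  set f : ℝ → ℝ := fun x => A.eval x * Real.exp (-2 * V.eval x) with hf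
  set g : ℝ → ℝ := fun x =>
    ((derivative A).eval x - 2 * (derivative V).eval x * A.eval x) *
      Real.exp (-2 * V.eval x) with hg
  have hderiv : ∀ x, HasDerivAt f (g x) x := by
    intro x
    have h1 : HasDerivAt (fun x => A.eval x) ((derivative A).eval x) x := A.hasDerivAt x
    have hv : HasDerivAt (fun x => -2 * V.eval x) (-2 * (derivative V).eval x) x :=
      (V.hasDerivAt x).const_mul (-2)
    have h2 := hv.exp
    have : HasDerivAt (fun y => A.eval y * Real.exp (-2 * V.eval y)) _ x := h1.mul h2
    convert this using 1
    simp [hg]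
    ring
  have hint : Integrable g := by
    have := integrable_poly_exp hV2 hVpos hVeven (derivative A - C 2 * derivative V * A)
    refine this.congr ?_
    refine ae_of_all _ fun x => ?_
    simp [hg]
  have htop : Tendsto f atTop (𝓝 0) := by
    have := decay_atTop hV2 hVpos A 0
    refine this.congr fun x => by simp [hf]
  have hbot : Tendsto f atBot (𝓝 0) := by
    have := decay_atBot hV2 hVpos hVeven A 0
    refine this.congr fun x => by simp [hf]
  have hIoi : ∫ x in Ioi (0:ℝ), g x = 0 - f 0 :=
    integral_Ioi_of_hasDerivAt_of_tendsto' (fun x _ => hderiv x) hint.integrableOn htop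
  have hIic : ∫ x in Iic (0:ℝ), g x = f 0 - 0 :=
    integral_Iic_of_hasDerivAt_of_tendsto' (fun x _ => hderiv x) hint.integrableOn hbot
  have := intervalIntegral.integral_Iic_add_Ioi (f := g) (b := (0:ℝ)) hint.integrableOn hint.integrableOn
  rw [hIic, hIoi] at this
  rw [← this]
  ring


lemma skew4_eq (hV2 : 2 ≤ V.natDegree) (hVpos : 0 < V.leadingCoeff)
    (hVeven : Even V.natDegree) (Pp Q : Polynomial ℝ) :
    skew4 V Pp Q =
      ∫ x : ℝ, ((derivative V * Pp - derivative Pp) * Q).eval x * Real.exp (-2 * V.eval x) := by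
  have hIBP := ibp hV2 hVpos hVeven (Pp * Q)
  have hint2 : Integrable (fun x =>
      ((derivative V * Pp - derivative Pp) * Q).eval x * Real.exp (-2 * V.eval x)) :=
    integrable_poly_exp hV2 hVpos hVeven _
  have hint3 : Integrable (fun x =>
      ((derivative (Pp * Q)).eval x - 2 * (derivative V).eval x * (Pp * Q).eval x) *
        Real.exp (-2 * V.eval x)) := by
    have := integrable_poly_exp hV2 hVpos hVeven
      (derivative (Pp * Q) - C 2 * derivative V * (Pp * Q))
    exact this.congr (ae_of_all _ fun x => by simp)
  unfold skew4
  have key : (fun x => (Pp.eval x * (derivative Q).eval x -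
        (derivative Pp).eval x * Q.eval x) * Real.exp (-2 * V.eval x))
      = fun x => 2 * (((derivative V * Pp - derivative Pp) * Q).eval x *
          Real.exp (-2 * V.eval x)) +
        ((derivative (Pp * Q)).eval x - 2 * (derivative V).eval x * (Pp * Q).eval x) *
          Real.exp (-2 * V.eval x) := by
    funext x
    simp only [derivative_mul, eval_mul, eval_add, eval_sub]
    ring
  rw [key, integral_add (hint2.const_mul 2) hint3, integral_const_mul, hIBP]
  ring

lemma skew4_antisymm (Pp Q : Polynomial ℝ) : skew4 V Pp Q = - skew4 V Q Pp := by
  unfold skew4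
  rw [← mul_neg, ← integral_neg]
  refine congrArg _ (congrArg _ (funext fun x => by ring))

lemma even_rootMultiplicity_nonneg :
    ∀ (N : ℕ) (p : Polynomial ℝ), p.natDegree ≤ N → p ≠ 0 → 0 < p.leadingCoeff →
    (∀ r : ℝ, Even (Polynomial.rootMultiplicity r p)) → ∀ x : ℝ, 0 ≤ p.eval x := by
  intro N
  induction N with
  | zero =>
    intro p hdeg hp hlead hmult x
    have h0 : p.natDegree = 0 := le_antisymm hdeg (Nat.zero_le _)
    have := Polynomial.eq_C_of_natDegree_eq_zero h0
    rw [this, eval_C]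
    have : p.coeff 0 = p.leadingCoeff := by rw [leadingCoeff, h0]
    rw [this]
    exact hlead.le
  | succ N ih =>
    intro p hdeg hp hlead hmult x
    by_cases hroot : ∃ r, p.IsRoot r
    · obtain ⟨r, hr⟩ := hroot
      set m := Polynomial.rootMultiplicity r p with hm
      have hm1 : 0 < m := (Polynomial.rootMultiplicity_pos hp).2 hr
      have hmeven := hmult r
      set q := p /ₘ (X - C r) ^ m with hq
      have hfac : (X - C r) ^ m * q = p := Polynomial.pow_mul_divByMonic_rootMultiplicity_eq p r
      have hq0 : q ≠ 0 := by
        intro h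
        rw [h, mul_zero] at hfac
        exact hp hfac.symm
      have hqr : ¬ q.IsRoot r := Polynomial.eval_divByMonic_pow_rootMultiplicity_ne_zero r hp
      have hmon : ((X - C r) ^ m).Monic := (monic_X_sub_C r).pow m
      have hlq : q.leadingCoeff = p.leadingCoeff := by
        rw [← hfac, leadingCoeff_mul, hmon.leadingCoeff, one_mul]
      have hdq : q.natDegree + m = p.natDegree := by
        rw [← hfac, natDegree_mul (pow_ne_zero _ (X_sub_C_ne_zero r)) hq0, natDegree_pow,
          natDegree_X_sub_C, mul_one]
        ring
      have hmultq : ∀ s, Even (Polynomial.rootMultiplicity s q) := by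
        intro s
        by_cases hs : s = r
        · subst hs
          rw [Polynomial.rootMultiplicity_eq_zero hqr]
          exact Even.zero
        · have hsp := hmult s
          rw [← hfac, Polynomial.rootMultiplicity_mul (by rw [hfac]; exact hp)] at hsp
          have hz : Polynomial.rootMultiplicity s ((X - C r) ^ m) = 0 := by
            refine Polynomial.rootMultiplicity_eq_zero ?_
            simp only [Polynomial.IsRoot, eval_pow, eval_sub, eval_X, eval_C]
            exact pow_ne_zero _ (sub_ne_zero.2 hs)
          rw [hz, zero_add] at hsp
          exact hsp
      have hxq := ih q (by omega) hq0 (hlq ▸ hlead) hmultq x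
      have : p.eval x = (x - r) ^ m * q.eval x := by
        rw [← hfac, eval_mul, eval_pow, eval_sub, eval_X, eval_C]
      rw [this]
      exact mul_nonneg (hmeven.pow_nonneg _) hxq
    · by_contra hneg
      push_neg at hneg
      have hd0 : p.natDegree ≠ 0 := by
        intro h0
        have := Polynomial.eq_C_of_natDegree_eq_zero h0
        rw [this, eval_C] at hneg
        have hcl : p.coeff 0 = p.leadingCoeff := by rw [leadingCoeff, h0]
        rw [hcl] at hneg
        linarith
      have hdegpos : 0 < p.degree := natDegree_pos_iff_degree_pos.1 (by omega)
      have htt := Polynomial.tendsto_atTop_of_leadingCoeff_nonneg p hdegpos hlead.le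
      obtain ⟨b, hb1, hb2⟩ := ((htt.eventually_ge_atTop 1).and (eventually_ge_atTop x)).exists
      have hmem : (0:ℝ) ∈ Icc (p.eval x) (p.eval b) := ⟨hneg.le, by linarith⟩
      obtain ⟨c, _, hc⟩ := intermediate_value_Icc hb2 p.continuous.continuousOn hmem
      exact hroot ⟨c, hc⟩

lemma rootMultiplicity_finset_prod (s : Finset ℝ) (r : ℝ) :
    Polynomial.rootMultiplicity r (∏ a ∈ s, (X - C a)) = if r ∈ s then 1 else 0 := by
  classical
  induction s using Finset.induction_on with
  | empty => simp [Polynomial.rootMultiplicity_eq_zero, Polynomial.IsRoot]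
  | @insert a s' ha ih =>
    rw [Finset.prod_insert ha]
    have hmon : (∏ b ∈ s', (X - C b)).Monic := monic_prod_of_monic _ _ fun i _ => monic_X_sub_C i
    have hne : (X - C a) * ∏ b ∈ s', (X - C b) ≠ 0 :=
      mul_ne_zero (X_sub_C_ne_zero a) hmon.ne_zero
    rw [Polynomial.rootMultiplicity_mul hne, Polynomial.rootMultiplicity_X_sub_C, ih]
    by_cases h1 : r = a
    · subst h1
      simp [ha]
    · simp [Ne.symm h1, h1, Finset.mem_insert]


lemma dualPoly_monic {D : ℕ} {γ : ℝ} (hD : 2 ≤ D) (hγ : 0 < γ)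
    (hVdeg : V.natDegree = D) (hVlead : V.leadingCoeff = γ)
    {Pp : Polynomial ℝ} (hmon : Pp.Monic) (hPdeg : Pp.natDegree ≠ 0) :
    (dualPoly V γ D Pp).Monic ∧
      (dualPoly V γ D Pp).natDegree = (D - 1) + Pp.natDegree := by
  have hgD : (γ * (D:ℝ)) ≠ 0 := by positivity
  have hc : (-(1 / (γ * (D:ℝ)))) ≠ 0 := by
    have : (0:ℝ) < 1 / (γ * (D:ℝ)) := by positivity
    intro h
    rw [neg_eq_zero] at h
    linarith
  have hcoD : V.coeff D = γ := by
    rw [← hVdeg, coeff_natDegree, hVlead]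
  have hco : (derivative V).coeff (D - 1) = γ * D := by
    rw [coeff_derivative]
    have h1 : D - 1 + 1 = D := by omega
    rw [h1, hcoD]
    have h2 : ((D - 1 : ℕ) : ℝ) + 1 = (D : ℝ) := by
      push_cast [Nat.cast_sub (by omega : 1 ≤ D)]
      ring
    rw [h2]
  have hV'deg : (derivative V).natDegree = D - 1 := by
    refine le_antisymm ((natDegree_derivative_le V).trans (by omega)) ?_
    exact le_natDegree_of_ne_zero (by rw [hco]; exact hgD)
  have hV'lead : (derivative V).leadingCoeff = γ * D := by
    rw [Polynomial.leadingCoeff, hV'deg, hco]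
  have hV'ne : derivative V ≠ 0 := leadingCoeff_ne_zero.1 (by rw [hV'lead]; exact hgD)
  have hVP : (derivative V * Pp).natDegree = (D - 1) + Pp.natDegree := by
    rw [natDegree_mul hV'ne hmon.ne_zero, hV'deg]
  have hVPlead : (derivative V * Pp).leadingCoeff = γ * D := by
    rw [leadingCoeff_mul, hV'lead, hmon.leadingCoeff, mul_one]
  have hPlt : (derivative Pp).natDegree < (derivative V * Pp).natDegree := by
    have := natDegree_derivative_lt hPdeg
    omega
  have hsubdeg : (derivative Pp - derivative V * Pp).natDegree = (D - 1) + Pp.natDegree :=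
    (natDegree_sub_eq_right_of_natDegree_lt hPlt).trans hVP
  have hsublead : (derivative Pp - derivative V * Pp).leadingCoeff = -(γ * D) := by
    rw [leadingCoeff_sub_of_degree_lt' (degree_lt_degree hPlt), hVPlead]
  constructor
  · unfold Polynomial.Monic
    rw [dualPoly, leadingCoeff_mul, leadingCoeff_C, hsublead]
    field_simp
  · rw [dualPoly, natDegree_C_mul hc, hsubdeg]

lemma integral_poly_exp_ne_zero (hV2 : 2 ≤ V.natDegree) (hVpos : 0 < V.leadingCoeff)
    (hVeven : Even V.natDegree) {W : Polynomial ℝ} (hW0 : W ≠ 0)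
    (hWnn : ∀ x : ℝ, 0 ≤ W.eval x) :
    (∫ x : ℝ, W.eval x * Real.exp (-2 * V.eval x)) ≠ 0 := by
  intro h
  have hint := integrable_poly_exp hV2 hVpos hVeven W
  have hnn : (0 : ℝ → ℝ) ≤ fun x => W.eval x * Real.exp (-2 * V.eval x) :=
    fun x => mul_nonneg (hWnn x) (Real.exp_nonneg _)
  have hae := (MeasureTheory.integral_eq_zero_iff_of_nonneg hnn hint).1 h
  have hcont : Continuous fun x => W.eval x * Real.exp (-2 * V.eval x) :=
    W.continuous.mul ((continuous_const.mul V.continuous).rexp)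
  have heq : (fun x => W.eval x * Real.exp (-2 * V.eval x)) = fun _ => (0:ℝ) := by
    exact (hcont.ae_eq_iff_eq volume continuous_const).1 hae
  have : W = 0 := by
    refine Polynomial.funext fun r => ?_
    have := congrFun heq r
    have hexp : Real.exp (-2 * V.eval r) ≠ 0 := Real.exp_ne_zero _
    rw [eval_zero]
    exact (mul_eq_zero.1 this).resolve_right hexp
  exact hW0 this

lemma coeff_zero_natDegree_lt {R : Polynomial ℝ} {k : ℕ} (hRk : R.natDegree ≤ k)
    (h0 : R.coeff k = 0) : R = 0 ∨ R.natDegree < k := by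
  by_cases hR : R = 0
  · exact Or.inl hR
  · right
    rcases lt_or_eq_of_le hRk with h | h
    · exact h
    · exfalso
      have : R.leadingCoeff = 0 := by rw [Polynomial.leadingCoeff, h, h0]
      exact hR (leadingCoeff_eq_zero.1 this)

end Helpers

/-- `Ψ_{2n+1}` has at least `2n` distinct real zeros, of which at least `2n−D/2`
are simple. -/
theorem dualPoly_odd_real_zeros
    (D : ℕ) (hD : 2 ≤ D) (hDeven : Even D) (γ : ℝ) (hγ : 0 < γ)
    (V : Polynomial ℝ) (hVdeg : V.natDegree = D) (hVlead : V.leadingCoeff = γ)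
    (P : ℕ → Polynomial ℝ) (hP : IsSkewOrthSeq V P) (n : ℕ) :
    ∃ s t : Finset ℝ, t ⊆ s ∧
      2 * n ≤ s.card ∧ 2 * n - D / 2 ≤ t.card ∧
      (∀ x ∈ s, (dualPoly V γ D (P (2 * n + 1))).eval x = 0) ∧
      (∀ x ∈ t, (derivative (dualPoly V γ D (P (2 * n + 1)))).eval x ≠ 0) := by
  classical
  obtain ⟨hPmd, hEE, hOO, hEO⟩ := hP
  have hV2 : 2 ≤ V.natDegree := hVdeg ▸ hD
  have hVpos : 0 < V.leadingCoeff := hVlead ▸ hγ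
  have hVeven : Even V.natDegree := hVdeg ▸ hDeven
  set Ψ : Polynomial ℝ := dualPoly V γ D (P (2 * n + 1)) with hΨdef
  have hPm := (hPmd (2 * n + 1)).1
  have hPd := (hPmd (2 * n + 1)).2
  obtain ⟨hΨm, hΨd⟩ := dualPoly_monic hD hγ hVdeg hVlead hPm (by rw [hPd]; omega)
  have hΨdeg : Ψ.natDegree = 2 * n + D := by
    rw [hΨdef, hΨd, hPd]; omega
  have hΨ0 : Ψ ≠ 0 := hΨm.ne_zero
  -- the linear functional
  set L : Polynomial ℝ → ℝ :=
    fun Q => ∫ x : ℝ, (Ψ * Q).eval x * Real.exp (-2 * V.eval x) with hL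
  have hgD : (0:ℝ) < γ * D := by positivity
  have hLskew : ∀ Q, L Q = (1 / (γ * D)) * skew4 V (P (2 * n + 1)) Q := by
    intro Q
    rw [hL, skew4_eq hV2 hVpos hVeven, ← integral_const_mul]
    refine congrArg _ (funext fun x => ?_)
    simp only [hΨdef, dualPoly, eval_mul, eval_sub, eval_C]
    ring
  have hLadd : ∀ A B, L (A + B) = L A + L B := by
    intro A B
    simp only [hL]
    have h1 : (fun x => (Ψ * (A + B)).eval x * Real.exp (-2 * V.eval x))
        = fun x => (Ψ * A).eval x * Real.exp (-2 * V.eval x)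
          + (Ψ * B).eval x * Real.exp (-2 * V.eval x) := by
      funext x
      simp only [eval_mul, eval_add]
      ring
    rw [h1, integral_add (integrable_poly_exp hV2 hVpos hVeven _)
      (integrable_poly_exp hV2 hVpos hVeven _)]
  have hLsmul : ∀ (c : ℝ) A, L (Polynomial.C c * A) = c * L A := by
    intro c A
    simp only [hL]
    rw [← integral_const_mul]
    refine congrArg _ (funext fun x => ?_)
    simp only [eval_mul, eval_C]
    ring
  have hL0 : L 0 = 0 := by simp [hL]
  have hLPj : ∀ j, j ≠ 2 * n → L (P j) = 0 := by
    intro j hj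
    rcases Nat.even_or_odd j with ⟨m, hm⟩ | ⟨m, hm⟩
    · have hm' : j = 2 * m := by omega
      have hne : m ≠ n := by omega
      have := hEO m n hne
      have hskew := skew4_antisymm (V := V) (P (2 * n + 1)) (P (2 * m))
      rw [hLskew, hm', hskew, this]
      ring
    · have hm' : j = 2 * m + 1 := by omega
      rw [hLskew, hm', hOO n m]
      ring
  have hLlow : ∀ k, k ≤ 2 * n → ∀ Q : Polynomial ℝ, (Q = 0 ∨ Q.natDegree < k) → L Q = 0 := by
    intro k
    induction k with
    | zero =>
      intro _ Q hQ
      rcases hQ with rfl | h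
      · exact hL0
      · omega
    | succ k ih =>
      intro hk Q hQ
      rcases hQ with rfl | hdeg
      · exact hL0
      have hdeg' : Q.natDegree ≤ k := by omega
      have hRdeg : (Q - C (Q.coeff k) * X ^ k) = 0 ∨
          (Q - C (Q.coeff k) * X ^ k).natDegree < k := by
        refine coeff_zero_natDegree_lt ?_ ?_
        · refine (natDegree_sub_le _ _).trans (max_le hdeg' ?_)
          exact (natDegree_C_mul_le _ _).trans (by simp)
        · simp [coeff_sub, coeff_C_mul, coeff_X_pow]
      have hXk : L (X ^ k) = 0 := by
        have h2 : ((X : Polynomial ℝ) ^ k - P k) = 0 ∨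
            ((X : Polynomial ℝ) ^ k - P k).natDegree < k := by
          refine coeff_zero_natDegree_lt ?_ ?_
          · refine (natDegree_sub_le _ _).trans (max_le (by simp) ?_)
            exact le_of_eq (hPmd k).2
          · have hc1 : ((X : Polynomial ℝ) ^ k).coeff k = 1 := by simp
            have hc2 : (P k).coeff k = 1 := by
              have h := (hPmd k).1.coeff_natDegree
              rw [(hPmd k).2] at h
              exact h
            rw [coeff_sub, hc1, hc2, sub_self]
        have h1 : (X ^ k : Polynomial ℝ) = P k + (X ^ k - P k) := by ring
        rw [h1, hLadd, hLPj k (by omega), ih (by omega) _ h2]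
        ring
      have hsplit : Q = (Q - C (Q.coeff k) * X ^ k) + C (Q.coeff k) * X ^ k := by ring
      calc L Q = L ((Q - C (Q.coeff k) * X ^ k) + C (Q.coeff k) * X ^ k) := by rw [← hsplit]
        _ = L (Q - C (Q.coeff k) * X ^ k) + L (C (Q.coeff k) * X ^ k) := hLadd _ _
        _ = 0 + Q.coeff k * L (X ^ k) := by rw [ih (by omega) _ hRdeg, hLsmul]
        _ = 0 := by rw [hXk]; ring
  -- the sets
  set s : Finset ℝ := Ψ.roots.toFinset.filter
    (fun r => Odd (Polynomial.rootMultiplicity r Ψ)) with hs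
  set t : Finset ℝ := s.filter (fun r => Polynomial.rootMultiplicity r Ψ = 1) with ht
  have hts : t ⊆ s := Finset.filter_subset _ _
  have hscard : 2 * n ≤ s.card := by
    by_contra hcon
    push_neg at hcon
    set Qs : Polynomial ℝ := ∏ r ∈ s, (X - C r) with hQs
    have hQsm : Qs.Monic := monic_prod_of_monic _ _ fun i _ => monic_X_sub_C i
    have hQsdeg : Qs.natDegree = s.card := by
      rw [hQs, natDegree_prod _ _ fun i _ => X_sub_C_ne_zero i]
      simp [natDegree_X_sub_C]
    have hLQs : L Qs = 0 :=
      hLlow (2 * n) le_rfl Qs (Or.inr (lt_of_le_of_lt (le_of_eq hQsdeg) hcon))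
    have hW0 : Ψ * Qs ≠ 0 := (hΨm.mul hQsm).ne_zero
    have hWnn : ∀ x : ℝ, 0 ≤ (Ψ * Qs).eval x := by
      refine even_rootMultiplicity_nonneg (Ψ * Qs).natDegree _ le_rfl hW0 ?_ ?_
      · rw [(hΨm.mul hQsm).leadingCoeff]
        norm_num
      · intro r
        rw [Polynomial.rootMultiplicity_mul hW0, rootMultiplicity_finset_prod]
        by_cases hrs : r ∈ s
        · simp only [hrs, if_true]
          have hodd : Odd (Polynomial.rootMultiplicity r Ψ) :=
            (Finset.mem_filter.1 hrs).2
          exact hodd.add_one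
        · simp only [hrs, if_false, add_zero]
          by_cases hroot : Ψ.IsRoot r
          · have hmem : r ∈ Ψ.roots.toFinset :=
              Multiset.mem_toFinset.2 (Polynomial.mem_roots'.2 ⟨hΨ0, hroot⟩)
            have : ¬ Odd (Polynomial.rootMultiplicity r Ψ) := by
              intro hodd
              exact hrs (Finset.mem_filter.2 ⟨hmem, hodd⟩)
            exact Nat.not_odd_iff_even.1 this
          · rw [Polynomial.rootMultiplicity_eq_zero hroot]
            exact Even.zero
    exact integral_poly_exp_ne_zero hV2 hVpos hVeven hW0 hWnn hLQs
  have hroots : ∀ x ∈ s, Ψ.eval x = 0 := by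
    intro x hx
    have := (Finset.mem_filter.1 hx).1
    exact (Polynomial.mem_roots'.1 (Multiset.mem_toFinset.1 this)).2
  -- counting
  have hsumle : ∑ r ∈ s, Polynomial.rootMultiplicity r Ψ ≤ 2 * n + D := by
    have h1 : ∑ r ∈ s, Polynomial.rootMultiplicity r Ψ
        ≤ ∑ r ∈ Ψ.roots.toFinset, Polynomial.rootMultiplicity r Ψ := by
      refine Finset.sum_le_sum_of_subset_of_nonneg (Finset.filter_subset _ _)
        fun _ _ _ => Nat.zero_le _
    have h2 : ∑ r ∈ Ψ.roots.toFinset, Polynomial.rootMultiplicity r Ψ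
        = Multiset.card Ψ.roots := by
      rw [← Multiset.toFinset_sum_count_eq]
      refine Finset.sum_congr rfl fun r _ => ?_
      rw [Polynomial.count_roots]
    have h3 : Multiset.card Ψ.roots ≤ Ψ.natDegree := Ψ.card_roots'
    omega
  have hsplitsum : ∑ r ∈ t, Polynomial.rootMultiplicity r Ψ
      + ∑ r ∈ s.filter (fun r => ¬ Polynomial.rootMultiplicity r Ψ = 1),
          Polynomial.rootMultiplicity r Ψ
      = ∑ r ∈ s, Polynomial.rootMultiplicity r Ψ := by
    rw [ht]
    exact Finset.sum_filter_add_sum_filter_not s _ _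
  have htsum : ∑ r ∈ t, Polynomial.rootMultiplicity r Ψ = t.card := by
    rw [Finset.sum_congr rfl fun r hr => (Finset.mem_filter.1 hr).2]
    simp [ht]
  have hbig : 3 * (s.filter (fun r => ¬ Polynomial.rootMultiplicity r Ψ = 1)).card
      ≤ ∑ r ∈ s.filter (fun r => ¬ Polynomial.rootMultiplicity r Ψ = 1),
          Polynomial.rootMultiplicity r Ψ := by
    have h := Finset.card_nsmul_le_sum
      (s.filter (fun r => ¬ Polynomial.rootMultiplicity r Ψ = 1))
      (fun r => Polynomial.rootMultiplicity r Ψ) 3 (fun r hr => by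
        obtain ⟨hrs, hrne⟩ := Finset.mem_filter.1 hr
        have hrne' : Polynomial.rootMultiplicity r Ψ ≠ 1 := hrne
        have hodd : Odd (Polynomial.rootMultiplicity r Ψ) := (Finset.mem_filter.1 hrs).2
        obtain ⟨j, hj⟩ := hodd
        show 3 ≤ Polynomial.rootMultiplicity r Ψ
        omega)
    simpa [smul_eq_mul, mul_comm] using h
  have hcards : t.card
      + (s.filter (fun r => ¬ Polynomial.rootMultiplicity r Ψ = 1)).card = s.card := by
    rw [ht]
    exact Finset.card_filter_add_card_filter_not _
  obtain ⟨d, hd⟩ := hDeven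
  have htcard : 2 * n - D / 2 ≤ t.card := by omega
  refine ⟨s, t, hts, hscard, htcard, hroots, ?_⟩
  intro r hr
  have hm1 : Polynomial.rootMultiplicity r Ψ = 1 := (Finset.mem_filter.1 hr).2
  have hq := Polynomial.eval_divByMonic_pow_rootMultiplicity_ne_zero r hΨ0
  have hfac : (X - C r) ^ Polynomial.rootMultiplicity r Ψ
      * (Ψ /ₘ (X - C r) ^ Polynomial.rootMultiplicity r Ψ) = Ψ :=
    Polynomial.pow_mul_divByMonic_rootMultiplicity_eq Ψ r
  set q : Polynomial ℝ := Ψ /ₘ (X - C r) ^ Polynomial.rootMultiplicity r Ψ with hqdef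
  rw [hm1, pow_one] at hfac
  have : derivative Ψ = derivative ((X - C r) * q) := by rw [hfac]
  rw [this, derivative_mul]
  simp only [derivative_sub, derivative_X, derivative_C, sub_zero, eval_add, eval_mul,
    eval_sub, eval_X, eval_C, one_mul, sub_self, zero_mul, add_zero]
  exact hq
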